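/- arXiv:1607.01004 — 2 statements merged into one kernel-verified Lean document; each statement's English description precedes it below -/
import Mathlib

section
/- Let S be a generalized 2d-gon that is a full subgeometry of a generalized 2d-gon S'. Then every line of S' is opposite (i.e., at distance d − 1 in the natural line-distance) to some line of S. -/
/-- A point-line incidence geometry. -/
structure Geometry where
  P : Type
  L : Type
  I : P → L → Prop

namespace Geometry

variable (G : Geometry)

/-- The incidence graph: bipartite graph on points and lines. -/
def incGraph : SimpleGraph (G.P ⊕ G.L) where
  Adj a b :=
    match a, b with
    | Sum.inl p, Sum.inr l => G.I p l
    | Sum.inr l, Sum.inl p => G.I p l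
    | _, _ => False
  symm := ⟨by rintro (p | l) (p' | l') h <;> simp_all⟩
  loopless := ⟨by rintro (p | l) h <;> simp_all⟩

/-- The point graph (collinearity graph). -/
def pointGraph : SimpleGraph G.P where
  Adj x y := x ≠ y ∧ ∃ l, G.I x l ∧ G.I y l
  symm := ⟨by rintro x y ⟨h, l, h1, h2⟩; exact ⟨h.symm, l, h2, h1⟩⟩
  loopless := ⟨by rintro x ⟨h, _⟩; exact h rfl⟩

/-- Distance between two points, in the point graph. -/
noncomputable def dist (x y : G.P) : ℕ := G.pointGraph.dist x y

/-- A generalized 2d-gon: the incidence graph has diameter 2d and girth 4d. -/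
def IsGenPolygon (d : ℕ) : Prop :=
  G.incGraph.ediam = (2 * d : ℕ) ∧ G.incGraph.girth = (4 * d : ℕ)

/-- The geometry has order (s, t): `s + 1` points on each line and `t + 1` lines
through each point. -/
def HasOrder (s t : ℕ) : Prop :=
  (∀ l : G.L, Nat.card {p : G.P // G.I p l} = s + 1) ∧
  (∀ p : G.P, Nat.card {l : G.L // G.I p l} = t + 1)

/-- Distance (in the point graph) from a point to a set of points. -/
noncomputable def distSet (x : G.P) (A : Set G.P) : ℕ := sInf (G.dist x '' A)

/-- Distance from a point to a line: the minimal point-graph distance to a point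
of the line. -/
noncomputable def ptLineDist (x : G.P) (l : G.L) : ℕ :=
  sInf {n : ℕ | ∃ q, G.I q l ∧ G.dist x q = n}

/-- Distance between two lines: the minimal point-graph distance between a point of
one and a point of the other. -/
noncomputable def lineDist (l m : G.L) : ℕ :=
  sInf {n : ℕ | ∃ p q, G.I p l ∧ G.I q m ∧ G.dist p q = n}

/-- The maximal value of a function on the points. -/
noncomputable def Mf (f : G.P → ℕ) : ℕ := ⨆ p, f p

/-- A (polygonal) valuation of a generalized 2d-gon. -/
structure IsValuation (f : G.P → ℕ) : Prop where
  exists_zero : ∃ p, f p = 0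
  line_prop : ∀ l : G.L, ∃! x, G.I x l ∧ ∀ y, G.I y l → y ≠ x → f y = f x + 1
  pv3 : ∀ x, f x < G.Mf f →
    ∀ l₁ l₂ : G.L, G.I x l₁ → G.I x l₂ →
      (∃ y, G.I y l₁ ∧ f y + 1 = f x) → (∃ y, G.I y l₂ ∧ f y + 1 = f x) → l₁ = l₂

/-- The subgeometry induced on a set of points and a set of lines. -/
def sub (PS : Set G.P) (LS : Set G.L) : Geometry :=
  ⟨PS, LS, fun p l => G.I p.1 l.1⟩

/-- The subgeometry determined by `PS` and `LS` is full: every point of the ambient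
geometry incident with a line of the subgeometry belongs to the subgeometry. -/
def IsFullSub (PS : Set G.P) (LS : Set G.L) : Prop :=
  ∀ l ∈ LS, ∀ p, G.I p l → p ∈ PS

/-- A hyperplane: a proper subset of the point set such that every line has exactly
one or all of its points in it. -/
def IsHyperplane (H : Set G.P) : Prop :=
  H ≠ Set.univ ∧ ∀ l : G.L, (∃! p, G.I p l ∧ p ∈ H) ∨ (∀ p, G.I p l → p ∈ H)

/-- A 1-ovoid: a set of points meeting every line in exactly one point. -/
def IsOvoid1 (O : Set G.P) : Prop := ∀ l : G.L, ∃! p, G.I p l ∧ p ∈ O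

/-- A semi-singular hyperplane of a generalized hexagon with center `p`:
`{p} ∪ Γ₁(p) ∪ O'`, where `O'` is a 1-ovoid of the geometry induced on `Γ₃(p)` by
the lines at distance 2 from `p`. -/
def IsSemiSingular (H : Set G.P) (p : G.P) : Prop :=
  ∃ O' : Set G.P,
    (∀ y ∈ O', G.dist p y = 3) ∧
    (∀ l : G.L, G.ptLineDist p l = 2 → ∃! y, G.I y l ∧ y ∈ O') ∧
    H = {p} ∪ {y | G.pointGraph.Adj p y} ∪ O'

/-- A partial linear space: two distinct points are on at most one common line. -/
def IsPartialLinear : Prop :=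
  ∀ (p q : G.P) (l m : G.L), p ≠ q → G.I p l → G.I q l → G.I p m → G.I q m → l = m

/-- A near 2d-gon: a partial linear space with connected point graph of diameter `d`,
in which every line has a unique point nearest to any given point. -/
def IsNearPolygon (d : ℕ) : Prop :=
  G.IsPartialLinear ∧ G.pointGraph.Connected ∧ G.pointGraph.ediam = (d : ℕ) ∧
  ∀ (x : G.P) (l : G.L), ∃! p, G.I p l ∧ ∀ q, G.I q l → G.dist x p ≤ G.dist x q

end Geometry

section GraphAux

open SimpleGraph

variable {V : Type} {G : SimpleGraph V}

/-- Two distinct paths between the same endpoints yield a cycle of at most the total length. -/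
lemma two_paths_cycle :
    ∀ (N : ℕ) {u v : V} (p q : G.Walk u v), p.length ≤ N → p.IsPath → q.IsPath → p ≠ q →
      ∃ (w : V) (c : G.Walk w w), c.IsCycle ∧ c.length ≤ p.length + q.length := by
  classical
  intro N
  induction N with
  | zero =>
    intro u v p q hlen hp hq hne
    cases p with
    | nil =>
      rw [Walk.isPath_iff_eq_nil] at hq
      exact absurd hq.symm hne
    | cons h p => simp [Walk.length_cons] at hlen
  | succ n ih =>
    intro u v p q hlen hp hq hne
    cases p with
    | nil =>
      rw [Walk.isPath_iff_eq_nil] at hq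
      exact absurd hq.symm hne
    | cons h₁ p₁ =>
      rename_i a
      cases q with
      | nil =>
        rw [Walk.isPath_iff_eq_nil] at hp
        simp at hp
      | cons h₂ q₁ =>
        rename_i b
        have hq0 := hq
        rw [Walk.cons_isPath_iff] at hp hq
        have hau : a ≠ u := h₁.ne'
        by_cases hab : a = b
        · subst hab
          have hpq : p₁ ≠ q₁ := by
            intro hcontr; subst hcontr; exact hne rfl
          obtain ⟨w, c, hc, hcl⟩ := ih p₁ q₁ (by simp [Walk.length_cons] at hlen; omega)
            hp.1 hq.1 hpq
          exact ⟨w, c, hc, by simp only [Walk.length_cons]; omega⟩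
        · by_cases hmem : a ∈ q₁.support
          · have hmem' : a ∈ (Walk.cons h₂ q₁).support := by
              rw [Walk.support_cons]; exact List.mem_cons_of_mem _ hmem
            set Q := (Walk.cons h₂ q₁).takeUntil a hmem' with hQ
            have hQpath : Q.IsPath := hq0.takeUntil hmem'
            have hedge : s(a, u) ∉ Q.edges := by
              intro hmemE
              have hE := Walk.edges_takeUntil_subset _ hmem' hmemE
              rw [Walk.edges_cons] at hE
              rcases List.mem_cons.mp hE with heq | hmemE'
              · rw [Sym2.eq_iff] at heq
                rcases heq with ⟨h1, h2⟩ | ⟨h1, h2⟩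
                · exact hau h1
                · exact hab h1
              · exact hq.2 (Walk.snd_mem_support_of_mem_edges q₁ hmemE')
            refine ⟨a, Walk.cons h₁.symm Q,
              (Walk.cons_isCycle_iff Q h₁.symm).mpr ⟨hQpath, hedge⟩, ?_⟩
            have hQl : Q.length ≤ (Walk.cons h₂ q₁).length := Walk.length_takeUntil_le _ hmem'
            simp only [Walk.length_cons] at hQl ⊢
            omega
          · have hq' : (Walk.cons h₁.symm (Walk.cons h₂ q₁)).IsPath := by
              rw [Walk.cons_isPath_iff]
              refine ⟨hq0, ?_⟩
              rw [Walk.support_cons]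
              intro hcontr
              rcases List.mem_cons.mp hcontr with h' | h'
              · exact hau h'
              · exact hmem h'
            have hne' : p₁ ≠ Walk.cons h₁.symm (Walk.cons h₂ q₁) := by
              intro hcontr
              have : u ∈ p₁.support := by
                rw [hcontr, Walk.support_cons, Walk.support_cons]
                exact List.mem_cons_of_mem _ List.mem_cons_self
              exact hp.2 this
            obtain ⟨w, c, hc, hcl⟩ := ih p₁ _ (by simp [Walk.length_cons] at hlen; omega)
              hp.1 hq' hne'
            refine ⟨w, c, hc, ?_⟩
            simp only [Walk.length_cons] at hcl ⊢
            omega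

lemma walk_parity (b : V → Bool) (hb : ∀ {x y}, G.Adj x y → b x ≠ b y) :
    ∀ {u v : V} (w : G.Walk u v), Even w.length ↔ b u = b v := by
  intro u v w
  induction w with
  | nil => simp
  | cons h p ih =>
    rename_i x y z
    have hbxy := hb h
    rw [Walk.length_cons, Nat.even_add_one, ih]
    cases hx : b x <;> cases hy : b y <;> cases hz : b z <;> simp_all

lemma dist_parity (b : V → Bool) (hb : ∀ {x y}, G.Adj x y → b x ≠ b y)
    {u v : V} (h : G.Reachable u v) : Even (G.dist u v) ↔ b u = b v := by
  obtain ⟨w, hw⟩ := h.exists_walk_length_eq_dist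
  rw [← hw]; exact walk_parity b hb w

lemma getVert_support_getElem :
    ∀ {u v : V} (p : G.Walk u v) (i : ℕ), i ≤ p.length → p.support[i]? = some (p.getVert i) := by
  intro u v p
  induction p with
  | nil =>
    intro i hi
    have : i = 0 := by simpa using hi
    subst this
    simp [Walk.getVert_zero]
  | cons h p ih =>
    intro i hi
    cases i with
    | zero => simp [Walk.support_cons, Walk.getVert_zero]
    | succ n =>
      rw [Walk.support_cons, List.getElem?_cons_succ, Walk.getVert_cons_succ]
      exact ih n (by simp [Walk.length_cons] at hi; omega)

lemma length_rotate [DecidableEq V] {u x : V} (c : G.Walk u u) (h : x ∈ c.support) :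
    (c.rotate x h).length = c.length := by
  have h2 := congrArg Walk.length (c.take_spec h)
  rw [Walk.length_append] at h2
  have h3 : c.rotate x h = (c.dropUntil x h).append (c.takeUntil x h) := rfl
  rw [h3, Walk.length_append]
  omega

lemma concat_ne {z x a b : V} (ha : G.Adj a x) (hb : G.Adj b x)
    (P : G.Walk z a) (Q : G.Walk z b) (hne : a ≠ b) : P.concat ha ≠ Q.concat hb := by
  intro he
  have h1 := congrArg Walk.reverse he
  rw [Walk.reverse_concat, Walk.reverse_concat] at h1
  have h2 := congrArg (fun w => Walk.getVert w 1) h1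
  simp only [Walk.getVert_cons_succ, Walk.getVert_zero] at h2
  exact hne h2

lemma geodesic_pair_bound {d : ℕ}
    (hcycmin : ∀ (w : V) (c : G.Walk w w), c.IsCycle → 4 * d ≤ c.length)
    (hreach : ∀ u v : V, G.Reachable u v)
    {z x a b : V} (ha : G.Adj a x) (hb : G.Adj b x) (hne : a ≠ b)
    (hda : G.dist z a + 1 = G.dist z x) (hdb : G.dist z b + 1 = G.dist z x) :
    4 * d ≤ 2 * G.dist z x := by
  obtain ⟨P, hPl⟩ := (hreach z a).exists_walk_length_eq_dist
  obtain ⟨Q, hQl⟩ := (hreach z b).exists_walk_length_eq_dist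
  have hR₁ : (P.concat ha).length = G.dist z x := by rw [Walk.length_concat]; omega
  have hR₂ : (Q.concat hb).length = G.dist z x := by rw [Walk.length_concat]; omega
  have p₁ : (P.concat ha).IsPath := Walk.isPath_of_length_eq_dist _ hR₁
  have p₂ : (Q.concat hb).IsPath := Walk.isPath_of_length_eq_dist _ hR₂
  obtain ⟨w, c, hc, hcl⟩ := two_paths_cycle (P.concat ha).length (P.concat ha) (Q.concat hb)
    le_rfl p₁ p₂ (concat_ne ha hb P Q hne)
  have h4 := hcycmin w c hc
  omega

lemma opp_exists {d : ℕ} (hd : 2 ≤ d)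
    (b : V → Bool) (hb : ∀ {x y}, G.Adj x y → b x ≠ b y)
    (hreach : ∀ u v : V, G.Reachable u v)
    (hdist : ∀ u v : V, G.dist u v ≤ 2 * d)
    (hcycmin : ∀ (w : V) (c : G.Walk w w), c.IsCycle → 4 * d ≤ c.length)
    {w₀ : V} {c : G.Walk w₀ w₀} (hc : c.IsCycle) (hlen : c.length = 4 * d)
    (z : V) : ∃ w, G.dist z w = 2 * d := by
  classical
  obtain ⟨x, hxmem', hxmax'⟩ := Finset.exists_max_image c.support.toFinset (fun y => G.dist z y)
    ⟨w₀, by simp [Walk.start_mem_support]⟩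
  rw [List.mem_toFinset] at hxmem'
  have hxmax : ∀ y ∈ c.support, G.dist z y ≤ G.dist z x := fun y hy =>
    hxmax' y (List.mem_toFinset.mpr hy)
  set M := G.dist z x with hM
  have hconn : G.Connected := (connected_iff _).mpr ⟨hreach, ⟨z⟩⟩
  set c' := c.rotate x hxmem' with hc'def
  have hc' : c'.IsCycle := hc.rotate hxmem'
  have hlen' : c'.length = 4 * d := by rw [hc'def, length_rotate]; exact hlen
  have h01 : G.Adj x (c'.getVert 1) := by
    have := c'.adj_getVert_succ (i := 0) (by omega)
    simpa [Walk.getVert_zero] using this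
  have hlast : G.Adj (c'.getVert (4 * d - 1)) x := by
    have h4 : 4 * d - 1 + 1 = c'.length := by omega
    have := c'.adj_getVert_succ (i := 4 * d - 1) (by omega)
    rw [h4, Walk.getVert_length] at this
    exact this
  set n₁ := c'.getVert 1 with hn₁
  set n₂ := c'.getVert (4 * d - 1) with hn₂
  have htail : c'.support.length = 4 * d + 1 := by rw [Walk.length_support, hlen']
  have hne12 : n₁ ≠ n₂ := by
    intro he
    have hnodup := hc'.2
    have e1 : c'.support[1]? = some n₁ := getVert_support_getElem c' 1 (by omega)
    have e2 : c'.support[4 * d - 1]? = some n₂ := getVert_support_getElem c' (4 * d - 1) (by omega)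
    rw [Walk.support_eq_cons] at e1 e2
    have hidx : 4 * d - 1 = (4 * d - 2) + 1 := by omega
    rw [hidx, List.getElem?_cons_succ] at e2
    rw [show (1 : ℕ) = 0 + 1 from rfl, List.getElem?_cons_succ] at e1
    have htl : c'.support.tail.length = 4 * d := by
      rw [List.length_tail, htail]
      omega
    have := List.getElem?_inj (l := c'.support.tail) (i := 0) (j := 4 * d - 2)
      (by omega) hnodup |>.mp (by rw [e1, e2, he])
    omega
  have hsub : ∀ y, y ∈ c'.support → y ∈ c.support := by
    intro y hy
    have hrot := Walk.support_rotate c x hxmem'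
    rw [Walk.support_eq_cons c'] at hy
    rcases List.mem_cons.mp hy with rfl | hy
    · exact hxmem'
    · have : y ∈ c.support.tail := (hrot.mem_iff).mp hy
      rw [Walk.support_eq_cons c]
      exact List.mem_cons_of_mem _ this
  have hmem1 : n₁ ∈ c.support := hsub _ (by
    rw [Walk.mem_support_iff_exists_getVert]; exact ⟨1, rfl, by omega⟩)
  have hmem2 : n₂ ∈ c.support := hsub _ (by
    rw [Walk.mem_support_iff_exists_getVert]; exact ⟨4 * d - 1, rfl, by omega⟩)
  have hM1 : 1 ≤ M := by
    by_contra h0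
    have hzx : z = x := (hreach z x).dist_eq_zero_iff.mp (by omega)
    have h1 : G.dist z n₁ = 1 := by
      rw [hzx]; exact SimpleGraph.dist_eq_one_iff_adj.mpr h01
    have := hxmax n₁ hmem1
    omega
  have hdandv : ∀ y : V, G.Adj x y → y ∈ c.support → G.dist z y = M - 1 := by
    intro y hadj hymem
    have hle : G.dist z y ≤ M := hxmax y hymem
    have hpar1 := dist_parity b hb (hreach z y)
    have hparx := dist_parity b hb (hreach z x)
    have hbne : b x ≠ b y := hb hadj
    have hnem : G.dist z y ≠ M := by
      intro heq
      rw [heq] at hpar1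
      cases h1 : b z <;> cases h2 : b x <;> cases h3 : b y <;> simp_all
    have htri : M ≤ G.dist z y + 1 := by
      have ht := hconn.dist_triangle (u := z) (v := y) (w := x)
      have h1 : G.dist y x = 1 := SimpleGraph.dist_eq_one_iff_adj.mpr hadj.symm
      omega
    omega
  have hd1 : G.dist z n₁ = M - 1 := hdandv n₁ h01 hmem1
  have hd2 : G.dist z n₂ = M - 1 := hdandv n₂ hlast.symm hmem2
  have hbound := geodesic_pair_bound (z := z) hcycmin hreach h01.symm hlast hne12
    (by omega) (by omega)
  have hMle : M ≤ 2 * d := hdist z x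
  exact ⟨x, by omega⟩

lemma walk_head_step {u v : V} (p : G.Walk u v) (hne : u ≠ v) :
    ∃ (a : V) (q : G.Walk a v), G.Adj u a ∧ q.length + 1 = p.length := by
  cases p with
  | nil => exact absurd rfl hne
  | cons h q => exact ⟨_, q, h, by simp [Walk.length_cons]⟩

lemma two_nbrs {d : ℕ} (hd : 2 ≤ d)
    (hreach : ∀ u v : V, G.Reachable u v)
    (hdist : ∀ u v : V, G.dist u v ≤ 2 * d)
    (hopp : ∀ z : V, ∃ w, G.dist z w = 2 * d) (y : V) :
    ∃ a b, a ≠ b ∧ G.Adj y a ∧ G.Adj y b := by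
  obtain ⟨w, hw⟩ := hopp y
  have hyw : y ≠ w := by
    intro h; subst h; rw [SimpleGraph.dist_self] at hw; omega
  obtain ⟨p, hp⟩ := (hreach y w).exists_walk_length_eq_dist
  obtain ⟨a, q, hadj, hlen⟩ := walk_head_step p hyw
  by_cases hall : ∀ b', G.Adj y b' → b' = a
  · exfalso
    obtain ⟨w₂, hw₂⟩ := hopp a
    have hyw₂ : y ≠ w₂ := by
      intro h; subst h
      have h1 : G.dist a y = 1 := SimpleGraph.dist_eq_one_iff_adj.mpr hadj.symm
      omega
    obtain ⟨p₂, hp₂⟩ := (hreach y w₂).exists_walk_length_eq_dist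
    obtain ⟨a₂, q₂, hadj₂, hlen₂⟩ := walk_head_step p₂ hyw₂
    have ha₂ : a₂ = a := hall a₂ hadj₂
    subst ha₂
    have h1 : G.dist a₂ w₂ ≤ q₂.length := SimpleGraph.dist_le q₂
    have h3 : G.dist y w₂ ≤ 2 * d := hdist _ _
    omega
  · push_neg at hall
    obtain ⟨b', hb', hba⟩ := hall
    exact ⟨b', a, hba, hb', hadj⟩

end GraphAux
section GeomAux

open SimpleGraph Sum

lemma Geometry.not_adj_inl_inl (G : Geometry) {p q : G.P} :
    ¬ G.incGraph.Adj (inl p) (inl q) := fun h => h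

lemma Geometry.not_adj_inr_inr (G : Geometry) {l m : G.L} :
    ¬ G.incGraph.Adj (inr l) (inr m) := fun h => h

lemma Geometry.adj_of_I (G : Geometry) {p : G.P} {m : G.L} (h : G.I p m) :
    G.incGraph.Adj (inl p) (inr m) := h

lemma Geometry.adj_of_I' (G : Geometry) {p : G.P} {m : G.L} (h : G.I p m) :
    G.incGraph.Adj (inr m) (inl p) := h

lemma Geometry.nbr_of_inr {G : Geometry} {l : G.L} {x : G.P ⊕ G.L}
    (h : G.incGraph.Adj (inr l) x) : ∃ p : G.P, x = inl p ∧ G.I p l := by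
  cases x with
  | inl p => exact ⟨p, rfl, h⟩
  | inr m => exact absurd h (G.not_adj_inr_inr)

lemma Geometry.nbr_of_inl {G : Geometry} {p : G.P} {x : G.P ⊕ G.L}
    (h : G.incGraph.Adj (inl p) x) : ∃ m : G.L, x = inr m ∧ G.I p m := by
  cases x with
  | inl q => exact absurd h (G.not_adj_inl_inl)
  | inr m => exact ⟨m, rfl, h⟩

lemma Geometry.inc_bipartite {G : Geometry} {x y : G.P ⊕ G.L} (h : G.incGraph.Adj x y) :
    x.isRight ≠ y.isRight := by
  cases x with
  | inl p =>
    cases y with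
    | inl q => exact absurd h (G.not_adj_inl_inl)
    | inr m => simp
  | inr l =>
    cases y with
    | inl q => simp
    | inr m => exact absurd h (G.not_adj_inr_inr)

lemma Geometry.genPolygon_facts (G : Geometry) (d : ℕ) (hd : 2 ≤ d) (hG : G.IsGenPolygon d) :
    (∀ u v : G.P ⊕ G.L, G.incGraph.Reachable u v) ∧
      (∀ u v : G.P ⊕ G.L, G.incGraph.dist u v ≤ 2 * d) ∧
      (∀ (w : G.P ⊕ G.L) (c : G.incGraph.Walk w w), c.IsCycle → 4 * d ≤ c.length) ∧
      (∃ (w : G.P ⊕ G.L) (c : G.incGraph.Walk w w), c.IsCycle ∧ c.length = 4 * d) := by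
  obtain ⟨hdiam, hgirth⟩ := hG
  have hnac : ¬ G.incGraph.IsAcyclic := by
    intro h
    have h0 := SimpleGraph.girth_eq_zero.mpr h
    rw [hgirth] at h0
    omega
  have hcycmin : ∀ (w : G.P ⊕ G.L) (c : G.incGraph.Walk w w), c.IsCycle → 4 * d ≤ c.length := by
    intro w c hc
    have h1 : G.incGraph.egirth ≤ (c.length : ℕ∞) := SimpleGraph.le_egirth.mp le_rfl w c hc
    have h3 : G.incGraph.girth ≤ c.length := by
      have h4 := ENat.toNat_le_toNat h1 (by simp)
      simpa [SimpleGraph.girth] using h4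
    rw [hgirth] at h3
    exact h3
  have hcyc : ∃ (w : G.P ⊕ G.L) (c : G.incGraph.Walk w w), c.IsCycle ∧ c.length = 4 * d := by
    obtain ⟨a, w, hw, hlen⟩ := SimpleGraph.exists_girth_eq_length.mpr hnac
    exact ⟨a, w, hw, by rw [← hlen]; exact hgirth⟩
  have hreach : ∀ u v : G.P ⊕ G.L, G.incGraph.Reachable u v := by
    intro u v
    apply SimpleGraph.reachable_of_edist_ne_top
    have h1 : G.incGraph.edist u v ≤ ((2 * d : ℕ) : ℕ∞) := hdiam ▸ SimpleGraph.edist_le_ediam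
    intro htop
    rw [htop, top_le_iff] at h1
    exact ENat.coe_ne_top _ h1
  have hdist : ∀ u v : G.P ⊕ G.L, G.incGraph.dist u v ≤ 2 * d := by
    intro u v
    have h1 : G.incGraph.edist u v ≤ ((2 * d : ℕ) : ℕ∞) := hdiam ▸ SimpleGraph.edist_le_ediam
    have hne : ((2 * d : ℕ) : ℕ∞) ≠ ⊤ := ENat.coe_ne_top _
    have h2 := ENat.toNat_le_toNat h1 hne
    simpa [SimpleGraph.dist] using h2
  exact ⟨hreach, hdist, hcycmin, hcyc⟩

lemma Geometry.ptWalk_to_incWalk (G : Geometry) {p q : G.P} (w : G.pointGraph.Walk p q) :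
    ∃ w' : G.incGraph.Walk (inl p) (inl q), w'.length = 2 * w.length := by
  induction w with
  | nil => exact ⟨.nil, rfl⟩
  | cons h w ih =>
    obtain ⟨hne, lmid, h1, h2⟩ := id h
    obtain ⟨w', hw'⟩ := ih
    exact ⟨.cons (G.adj_of_I h1) (.cons (G.adj_of_I' h2) w'),
      by simp [SimpleGraph.Walk.length_cons, hw']; ring⟩

lemma Geometry.walk_start_line (G : Geometry) {u v : G.P ⊕ G.L} (w : G.incGraph.Walk u v) :
    ∀ {l : G.L}, u = inr l → w.length ≠ 0 →
      ∃ p : G.P, G.I p l ∧ ∃ w' : G.incGraph.Walk (inl p) v, w'.length + 1 = w.length := by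
  cases w with
  | nil => intro l hu h0; simp at h0
  | cons h w' =>
    intro l hu h0
    subst hu
    obtain ⟨p, rfl, hpl⟩ := Geometry.nbr_of_inr h
    exact ⟨p, hpl, w', by simp [SimpleGraph.Walk.length_cons]⟩

lemma Geometry.walk_start_point (G : Geometry) {u v : G.P ⊕ G.L} (w : G.incGraph.Walk u v) :
    ∀ {p : G.P}, u = inl p → w.length ≠ 0 →
      ∃ m : G.L, G.I p m ∧ ∃ w' : G.incGraph.Walk (inr m) v, w'.length + 1 = w.length := by
  cases w with
  | nil => intro p hu h0; simp at h0
  | cons h w' =>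
    intro p hu h0
    subst hu
    obtain ⟨m, rfl, hpm⟩ := Geometry.nbr_of_inl h
    exact ⟨m, hpm, w', by simp [SimpleGraph.Walk.length_cons]⟩

lemma Geometry.incWalk_to_ptWalk (G : Geometry) :
    ∀ (n : ℕ) {p q : G.P} (w : G.incGraph.Walk (inl p) (inl q)), w.length ≤ n →
      ∃ w' : G.pointGraph.Walk p q, 2 * w'.length ≤ w.length := by
  intro n
  induction n with
  | zero =>
    intro p q w hw
    have h0 : (inl p : G.P ⊕ G.L) = inl q :=
      SimpleGraph.Walk.eq_of_length_eq_zero (p := w) (by omega)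
    obtain rfl : p = q := inl.inj h0
    exact ⟨.nil, by simp⟩
  | succ n ih =>
    intro p q w hw
    by_cases h0 : w.length = 0
    · have h1 : (inl p : G.P ⊕ G.L) = inl q := SimpleGraph.Walk.eq_of_length_eq_zero h0
      obtain rfl : p = q := inl.inj h1
      exact ⟨.nil, by simp⟩
    · obtain ⟨m, hpm, w₁, hl₁⟩ := G.walk_start_point w rfl h0
      have h1 : w₁.length ≠ 0 := by
        intro hz
        exact absurd (SimpleGraph.Walk.eq_of_length_eq_zero hz) (by simp)
      obtain ⟨p', hp'm, w₂, hl₂⟩ := G.walk_start_line w₁ rfl h1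
      obtain ⟨w₃, hw₃⟩ := ih w₂ (by omega)
      by_cases hpp : p = p'
      · subst hpp
        exact ⟨w₃, by omega⟩
      · have hadj : G.pointGraph.Adj p p' := ⟨hpp, m, hpm, hp'm⟩
        exact ⟨.cons hadj w₃, by simp [SimpleGraph.Walk.length_cons]; omega⟩

lemma Geometry.incDist_eq (G : Geometry)
    (hreach : ∀ u v : G.P ⊕ G.L, G.incGraph.Reachable u v) (p q : G.P) :
    G.incGraph.dist (inl p) (inl q) = 2 * G.pointGraph.dist p q := by
  obtain ⟨w, hw⟩ := (hreach (inl p) (inl q)).exists_walk_length_eq_dist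
  obtain ⟨w', hw'⟩ := G.incWalk_to_ptWalk w.length w le_rfl
  have h1 : G.pointGraph.dist p q ≤ w'.length := SimpleGraph.dist_le w'
  have hr : G.pointGraph.Reachable p q := ⟨w'⟩
  obtain ⟨w₂, hw₂⟩ := hr.exists_walk_length_eq_dist
  obtain ⟨w₂', hw₂'⟩ := G.ptWalk_to_incWalk w₂
  have h2 : G.incGraph.dist (inl p) (inl q) ≤ w₂'.length := SimpleGraph.dist_le w₂'
  omega

end GeomAux

open SimpleGraph Sum in
/-- If a generalized 2d-gon S is a full subgeometry of a generalized 2d-gon S',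
then every line of S' is opposite (at line-distance d − 1) to some line of S. -/
theorem line_opposite_subline (G : Geometry) (d : ℕ) (hd : 2 ≤ d)
    (hG : G.IsGenPolygon d) (PS : Set G.P) (LS : Set G.L)
    (hfull : G.IsFullSub PS LS) (hS : (G.sub PS LS).IsGenPolygon d)
    (l : G.L) :
    ∃ m ∈ LS, G.lineDist l m = d - 1 := by
  classical
  obtain ⟨hreach, hdist, hcycmin, -⟩ := G.genPolygon_facts d hd hG
  obtain ⟨reachS, distS, cycminS, w₀S, cS, hcS, hclenS⟩ :=
    (G.sub PS LS).genPolygon_facts d hd hS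
  have hconn : G.incGraph.Connected := (connected_iff _).mpr ⟨hreach, ⟨inr l⟩⟩
  have oppS : ∀ z, ∃ w, (G.sub PS LS).incGraph.dist z w = 2 * d := fun z =>
    opp_exists hd (fun x : (G.sub PS LS).P ⊕ (G.sub PS LS).L => x.isRight)
      (fun {x y} h => Geometry.inc_bipartite h)
      reachS distS cycminS hcS hclenS z
  have nbrsS : ∀ y, ∃ a b, a ≠ b ∧ (G.sub PS LS).incGraph.Adj y a ∧
      (G.sub PS LS).incGraph.Adj y b := two_nbrs hd reachS distS oppS
  obtain ⟨mstar, hmstar⟩ : ∃ m : G.L, m ∈ LS := by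
    cases w₀S with
    | inl p0 =>
      obtain ⟨a, b, hab, ha, hb⟩ := nbrsS (inl p0)
      obtain ⟨mS, rfl, hmI⟩ := Geometry.nbr_of_inl ha
      exact ⟨mS.1, mS.2⟩
    | inr l0 => exact ⟨l0.1, l0.2⟩
  set T : Set ℕ := {n | ∃ m ∈ LS, G.incGraph.dist (inr l) (inr m) = n} with hT
  have hTne : T.Nonempty := ⟨_, mstar, hmstar, rfl⟩
  have hTbdd : BddAbove T := ⟨2 * d, by rintro n ⟨m, hm, rfl⟩; exact hdist _ _⟩
  obtain ⟨m₀, hm₀, hm₀d⟩ : ∃ m ∈ LS, G.incGraph.dist (inr l) (inr m) = sSup T :=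
    Nat.sSup_mem hTne hTbdd
  set k := sSup T with hk
  have hmax : ∀ m ∈ LS, G.incGraph.dist (inr l) (inr m) ≤ k := fun m hm =>
    le_csSup hTbdd ⟨m, hm, rfl⟩
  have hkeven : Even k := by
    rw [← hm₀d]
    exact (dist_parity (fun x : G.P ⊕ G.L => x.isRight) (fun {x y} h => Geometry.inc_bipartite h)
      (hreach _ _)).mpr rfl
  have hkle : k ≤ 2 * d := by rw [← hm₀d]; exact hdist _ _
  have hkey : k = 2 * d := by
    by_contra hklt
    have hk2 : k ≤ 2 * d - 2 := by obtain ⟨t, ht⟩ := hkeven; omega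
    obtain ⟨a, b, hab, ha, hb⟩ := nbrsS (inr ⟨m₀, hm₀⟩)
    obtain ⟨p₁S, rfl, hp₁I⟩ := Geometry.nbr_of_inr ha
    obtain ⟨p₂S, rfl, hp₂I⟩ := Geometry.nbr_of_inr hb
    have hp₁I' : G.I p₁S.1 m₀ := hp₁I
    have hp₂I' : G.I p₂S.1 m₀ := hp₂I
    have hp12 : p₁S.1 ≠ p₂S.1 := by
      intro h; exact hab (by rw [Subtype.ext h])
    have hoddp : ∀ p : G.P, ¬ Even (G.incGraph.dist (inr l) (inl p)) := by
      intro p hev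
      have := (dist_parity (fun x : G.P ⊕ G.L => x.isRight) (fun {x y} h => Geometry.inc_bipartite h)
        (hreach (inr l) (inl p))).mp hev
      simp at this
    have hrange : ∀ p : G.P, G.I p m₀ →
        G.incGraph.dist (inr l) (inl p) = k - 1 ∨
        G.incGraph.dist (inr l) (inl p) = k + 1 := by
      intro p hp
      have h1 : G.incGraph.dist (inr m₀) (inl p) = 1 :=
        SimpleGraph.dist_eq_one_iff_adj.mpr (G.adj_of_I' hp)
      have h4 : G.incGraph.dist (inl p) (inr m₀) = 1 := by
        rw [SimpleGraph.dist_comm]; exact h1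
      have h2 := hconn.dist_triangle (u := inr l) (v := inr m₀) (w := inl p)
      have h3 := hconn.dist_triangle (u := inr l) (v := inl p) (w := inr m₀)
      have h5 : G.incGraph.dist (inr l) (inl p) ≠ k := by
        intro he; exact hoddp p (he ▸ hkeven)
      omega
    have hstep : ∃ p : G.P, G.I p m₀ ∧ p ∈ PS ∧
        G.incGraph.dist (inr l) (inl p) = k + 1 := by
      rcases hrange p₁S.1 hp₁I' with h1 | h1
      · rcases hrange p₂S.1 hp₂I' with h2 | h2
        · exfalso
          have hk1 : 1 ≤ k := by
            by_contra h0
            have hz : G.incGraph.dist (inr l) (inl p₁S.1) = 0 := by omega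
            have := (hreach _ _).dist_eq_zero_iff.mp hz
            simp at this
          have hbd := geodesic_pair_bound (z := inr l) hcycmin hreach
            (G.adj_of_I hp₁I') (G.adj_of_I hp₂I')
            (by simpa using hp12) (by rw [h1, hm₀d]; omega) (by rw [h2, hm₀d]; omega)
          rw [hm₀d] at hbd
          omega
        · exact ⟨p₂S.1, hp₂I', p₂S.2, h2⟩
      · exact ⟨p₁S.1, hp₁I', p₁S.2, h1⟩
    obtain ⟨p, hpI, hpPS, hpd⟩ := hstep
    obtain ⟨a', b', hab', ha', hb'⟩ := nbrsS (inl ⟨p, hpPS⟩)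
    obtain ⟨m₁S, rfl, hm₁I⟩ := Geometry.nbr_of_inl ha'
    obtain ⟨m₂S, rfl, hm₂I⟩ := Geometry.nbr_of_inl hb'
    obtain ⟨mS, hmne, hmI⟩ : ∃ mS : ↥LS, mS.1 ≠ m₀ ∧ G.I p mS.1 := by
      by_cases h1 : m₁S.1 = m₀
      · refine ⟨m₂S, fun h2 => hab' ?_, hm₂I⟩
        rw [Subtype.ext (h1.trans h2.symm)]
      · exact ⟨m₁S, h1, hm₁I⟩
    have hd' : G.incGraph.dist (inr l) (inr mS.1) = k := by
      have hle := hmax mS.1 mS.2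
      have h2 := hconn.dist_triangle (u := inr l) (v := inr mS.1) (w := inl p)
      have h3 : G.incGraph.dist (inr mS.1) (inl p) = 1 :=
        SimpleGraph.dist_eq_one_iff_adj.mpr (G.adj_of_I' hmI)
      omega
    have hk0 : k ≠ 0 := by
      intro h0
      have e1 : (inr l : G.P ⊕ G.L) = inr m₀ :=
        (hreach _ _).dist_eq_zero_iff.mp (by omega)
      have e2 : (inr l : G.P ⊕ G.L) = inr mS.1 :=
        (hreach _ _).dist_eq_zero_iff.mp (by omega)
      exact hmne (inr.inj (e2.symm.trans e1))
    have hbd := geodesic_pair_bound (z := inr l) hcycmin hreach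
      (G.adj_of_I' hpI) (G.adj_of_I' hmI)
      (fun h => hmne (inr.inj h).symm)
      (by rw [hm₀d, hpd]) (by rw [hd', hpd])
    rw [hpd] at hbd
    omega
  refine ⟨m₀, hm₀, ?_⟩
  have hK : G.incGraph.dist (inr l) (inr m₀) = 2 * d := by rw [hm₀d, hkey]
  obtain ⟨w, hwl⟩ := (hreach (inr l) (inr m₀)).exists_walk_length_eq_dist
  rw [hK] at hwl
  obtain ⟨p, hpl, w₁, hl₁⟩ := G.walk_start_line w rfl (by omega)
  obtain ⟨q, hqm, w₂, hl₂⟩ := G.walk_start_line w₁.reverse rfl (by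
    rw [SimpleGraph.Walk.length_reverse]; omega)
  have hw₂len : w₂.length = 2 * d - 2 := by
    rw [SimpleGraph.Walk.length_reverse] at hl₂; omega
  have hub : G.incGraph.dist (inl p) (inl q) ≤ 2 * d - 2 := by
    have h1 := SimpleGraph.dist_le w₂
    rw [hw₂len] at h1
    rw [SimpleGraph.dist_comm]
    exact h1
  have h1p : G.incGraph.dist (inr l) (inl p) ≤ 1 :=
    (SimpleGraph.dist_eq_one_iff_adj.mpr (G.adj_of_I' hpl)).le
  have h1q : G.incGraph.dist (inl q) (inr m₀) ≤ 1 :=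
    (SimpleGraph.dist_eq_one_iff_adj.mpr (G.adj_of_I hqm)).le
  have htr1 := hconn.dist_triangle (u := inr l) (v := inl p) (w := inr m₀)
  have htr2 := hconn.dist_triangle (u := inl p) (v := inl q) (w := inr m₀)
  have hD : G.incGraph.dist (inl p) (inl q) = 2 * d - 2 := by omega
  have hpt : G.pointGraph.dist p q = d - 1 := by
    have h5 := G.incDist_eq hreach p q
    omega
  have hmem : (d - 1) ∈ {n : ℕ | ∃ p q, G.I p l ∧ G.I q m₀ ∧ G.dist p q = n} :=
    ⟨p, q, hpl, hqm, hpt⟩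
  have hlb : ∀ n ∈ {n : ℕ | ∃ p q, G.I p l ∧ G.I q m₀ ∧ G.dist p q = n}, d - 1 ≤ n := by
    rintro n ⟨p', q', h1, h2, h3⟩
    have h4 : G.pointGraph.dist p' q' = n := h3
    have h5 := G.incDist_eq hreach p' q'
    have h6 : G.incGraph.dist (inr l) (inl p') ≤ 1 :=
      (SimpleGraph.dist_eq_one_iff_adj.mpr (G.adj_of_I' h1)).le
    have h7 : G.incGraph.dist (inl q') (inr m₀) ≤ 1 :=
      (SimpleGraph.dist_eq_one_iff_adj.mpr (G.adj_of_I h2)).le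
    have h8 := hconn.dist_triangle (u := inr l) (v := inl p') (w := inr m₀)
    have h9 := hconn.dist_triangle (u := inl p') (v := inl q') (w := inr m₀)
    omega
  exact le_antisymm (Nat.sInf_le hmem) (le_csInf ⟨_, hmem⟩ hlb)
end

section
/- Let S be a generalized 2d-gon that is a full subgeometry of a generalized 2d-gon S', and for a point x of S' let H_x be the set of points of S at distance at most d − 1 from x. If x_1, x_2, x_3 are three distinct points on a common line of S', then H_{x_1} ∩ H_{x_2} = H_{x_1} ∩ H_{x_3}. -/
open SimpleGraph

section Aux

variable {G : Geometry}

lemma adj_pl {p : G.P} {l : G.L} (h : G.I p l) :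
    G.incGraph.Adj (Sum.inl p) (Sum.inr l) := h

lemma adj_lp {p : G.P} {l : G.L} (h : G.I p l) :
    G.incGraph.Adj (Sum.inr l) (Sum.inl p) := h

lemma inc_walk_even : ∀ {a b : G.P ⊕ G.L} (w : G.incGraph.Walk a b),
    Even w.length ↔ a.isLeft = b.isLeft := by
  intro a b w
  induction w with
  | nil => simp
  | @cons a c b h w ih =>
    have hflip : a.isLeft = !c.isLeft := by
      rcases a with p | l <;> rcases c with p' | l' <;>
        first
          | exact (h : False).elim
          | rfl
    rw [Walk.length_cons, Nat.even_add_one, ih, hflip]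
    cases c.isLeft <;> cases b.isLeft <;> simp

end Aux

section Conv
variable {G : Geometry}

lemma exists_incWalk : ∀ {x y : G.P} (w : G.pointGraph.Walk x y),
    ∃ w' : G.incGraph.Walk (Sum.inl x) (Sum.inl y), w'.length = 2 * w.length := by
  intro x y w
  induction w with
  | nil => exact ⟨Walk.nil, rfl⟩
  | @cons x z y h w ih =>
    obtain ⟨hne, l, hx, hz⟩ := h
    obtain ⟨w', hw'⟩ := ih
    refine ⟨Walk.cons (adj_pl hx) (Walk.cons (adj_lp hz) w'), ?_⟩
    change w'.length + 1 + 1 = 2 * (w.length + 1); rw [hw']; ring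

lemma exists_ptWalk : ∀ (n : ℕ) {a b : G.P ⊕ G.L} (w : G.incGraph.Walk a b),
    w.length ≤ n → ∀ {x y : G.P}, a = Sum.inl x → b = Sum.inl y →
    ∃ w' : G.pointGraph.Walk x y, 2 * w'.length ≤ w.length := by
  intro n
  induction n with
  | zero =>
    intro a b w hw x y ha hb
    have hab : a = b := Walk.eq_of_length_eq_zero (Nat.le_zero.mp hw)
    subst ha hb
    obtain rfl : x = y := Sum.inl.inj hab
    exact ⟨Walk.nil, by simp⟩
  | succ n ih =>
    intro a b w hw x y ha hb
    cases w with
    | nil =>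
      subst ha
      obtain rfl : x = y := Sum.inl.inj hb
      exact ⟨Walk.nil, by simp⟩
    | @cons _ c _ h w1 =>
      subst ha hb
      cases c with
      | inl p => exact (h : False).elim
      | inr l =>
        cases w1 with
        | @cons _ c2 _ h2 w2 =>
          cases c2 with
          | inr l2 => exact (h2 : False).elim
          | inl z =>
            have hlen : w2.length ≤ n := by
              simp only [Walk.length_cons] at hw; omega
            obtain ⟨w', hw'⟩ := ih w2 hlen rfl rfl
            by_cases hxz : x = z
            · subst hxz
              exact ⟨w', by simp only [Walk.length_cons]; omega⟩
            · exact ⟨Walk.cons ⟨hxz, l, h, h2⟩ w',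
                by show 2 * (w'.length + 1) ≤ _; simp only [Walk.length_cons]; omega⟩

lemma pt_reachable (hreach : ∀ a b : G.P ⊕ G.L, G.incGraph.Reachable a b)
    (x y : G.P) : G.pointGraph.Reachable x y := by
  obtain ⟨w⟩ := hreach (Sum.inl x) (Sum.inl y)
  obtain ⟨w', _⟩ := exists_ptWalk w.length w le_rfl rfl rfl
  exact ⟨w'⟩

lemma inc_dist_eq (hreach : ∀ a b : G.P ⊕ G.L, G.incGraph.Reachable a b)
    (x y : G.P) :
    G.incGraph.dist (Sum.inl x) (Sum.inl y) = 2 * G.pointGraph.dist x y := by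
  refine le_antisymm ?_ ?_
  · obtain ⟨w, hw⟩ := (pt_reachable hreach x y).exists_walk_length_eq_dist
    obtain ⟨w', hw'⟩ := exists_incWalk w
    calc G.incGraph.dist (Sum.inl x) (Sum.inl y) ≤ w'.length := SimpleGraph.dist_le w'
    _ = 2 * G.pointGraph.dist x y := by rw [hw', hw]
  · obtain ⟨w, hw⟩ := (hreach (Sum.inl x) (Sum.inl y)).exists_walk_length_eq_dist
    obtain ⟨w', hw'⟩ := exists_ptWalk w.length w le_rfl rfl rfl
    have := SimpleGraph.dist_le w'
    omega

end Conv

section Cycle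
variable {α : Type} {Γ : SimpleGraph α}

lemma cycle_of_two_paths : ∀ (n : ℕ) {u v : α} (p q : Γ.Walk u v),
    p.IsPath → q.IsPath → p ≠ q → p.length + q.length ≤ n →
    ∃ (w : α) (c : Γ.Walk w w), c.IsCycle ∧ c.length ≤ p.length + q.length := by
  classical
  intro n
  induction n with
  | zero =>
    intro u v p q hp hq hne hlen
    have hp0 : p.length = 0 := by omega
    have := Walk.eq_of_length_eq_zero hp0
    subst this
    rw [Walk.isPath_iff_eq_nil] at hp hq
    exact absurd (hp.trans hq.symm) hne
  | succ n ih =>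
    intro u v p q hp hq hne hlen
    cases p with
    | nil =>
      rw [Walk.isPath_iff_eq_nil] at hq
      exact absurd hq.symm hne
    | @cons _ a _ h p' =>
      cases q with
      | nil =>
        rw [Walk.isPath_iff_eq_nil] at hp
        exact absurd hp hne
      | @cons _ b _ h' q' =>
        by_cases hab : a = b
        · subst hab
          have hne' : p' ≠ q' := by rintro rfl; exact hne rfl
          obtain ⟨w, c, hc, hlc⟩ := ih p' q' hp.of_cons hq.of_cons hne'
            (by simp only [Walk.length_cons] at hlen; omega)
          exact ⟨w, c, hc, by simp only [Walk.length_cons]; omega⟩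
        · rw [Walk.cons_isPath_iff] at hp hq
          have hep' : s(u, a) ∉ p'.edges := fun he =>
            hp.2 (p'.fst_mem_support_of_mem_edges he)
          have heq : s(u, a) ∉ (Walk.cons h' q').edges := by
            simp only [Walk.edges_cons, List.mem_cons]
            rintro (habs | he)
            · exact hab (Sym2.congr_right.mp habs)
            · exact hq.2 (q'.fst_mem_support_of_mem_edges he)
          set W : Γ.Walk a u := p'.append (Walk.cons h' q').reverse with hW
          have heW : s(u, a) ∉ W.edges := by
            rw [hW, Walk.edges_append, Walk.edges_reverse]
            simp only [List.mem_append, List.mem_reverse]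
            rintro (he | he)
            · exact hep' he
            · exact heq he
          have hPe : s(u, a) ∉ W.bypass.edges := fun hh =>
            heW (W.edges_bypass_subset hh)
          refine ⟨u, Walk.cons h W.bypass, ?_, ?_⟩
          · rw [Walk.cons_isCycle_iff]
            exact ⟨W.bypass_isPath, hPe⟩
          · have h1 := W.length_bypass_le
            have h2 : W.length = p'.length + (q'.length + 1) := by
              rw [hW, Walk.length_append, Walk.length_reverse, Walk.length_cons]
            simp only [Walk.length_cons]
            omega

end Cycle

section Key

lemma key_lemma (G : Geometry) (d : ℕ) (hd : 2 ≤ d) (hG : G.IsGenPolygon d)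
    (L : G.L) (x₁ x₂ x₃ : G.P) (h1 : G.I x₁ L) (h2 : G.I x₂ L) (h3 : G.I x₃ L)
    (h12 : x₁ ≠ x₂) (h13 : x₁ ≠ x₃) (h23 : x₂ ≠ x₃) (y : G.P)
    (ha : G.dist x₁ y ≤ d - 1) (hb : G.dist x₂ y ≤ d - 1) :
    G.dist x₃ y ≤ d - 1 := by
  classical
  by_contra hc
  push_neg at hc
  set Γ := G.incGraph with hΓ
  have hediam : Γ.ediam = ((2 * d : ℕ) : ℕ∞) := hG.1
  have hreach : ∀ a b : G.P ⊕ G.L, Γ.Reachable a b := by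
    intro a b
    apply reachable_of_edist_ne_top
    have h := edist_le_ediam (G := Γ) (u := a) (v := b)
    rw [hediam] at h
    exact ne_top_of_le_ne_top (ENat.coe_ne_top _) h
  have hdist_le : ∀ a b : G.P ⊕ G.L, Γ.dist a b ≤ 2 * d := by
    intro a b
    obtain ⟨w, hw⟩ := (hreach a b).exists_walk_length_eq_edist
    have h := edist_le_ediam (G := Γ) (u := a) (v := b)
    rw [hediam, ← hw, Nat.cast_le] at h
    exact (SimpleGraph.dist_le w).trans h
  have hptreach : ∀ x z : G.P, G.pointGraph.Reachable x z := pt_reachable hreach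
  have hconn : G.pointGraph.Connected := by
    have : Nonempty G.P := ⟨y⟩
    exact ⟨fun a b => hptreach a b⟩
  have hde : ∀ x z : G.P, Γ.dist (Sum.inl x) (Sum.inl z) = 2 * G.dist x z :=
    inc_dist_eq hreach
  -- point-graph adjacencies
  have adj13 : G.pointGraph.Adj x₁ x₃ := ⟨h13, L, h1, h3⟩
  have adj23 : G.pointGraph.Adj x₂ x₃ := ⟨h23, L, h2, h3⟩
  have d13 : G.dist x₁ x₃ = 1 := dist_eq_one_iff_adj.mpr adj13
  have d23 : G.dist x₂ x₃ = 1 := dist_eq_one_iff_adj.mpr adj23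
  have tri1 : G.dist x₃ y ≤ G.dist x₃ x₁ + G.dist x₁ y := hconn.dist_triangle
  have tri2 : G.dist x₃ y ≤ G.dist x₃ x₂ + G.dist x₂ y := hconn.dist_triangle
  rw [show G.dist x₃ x₁ = G.dist x₁ x₃ from SimpleGraph.dist_comm, d13] at tri1
  rw [show G.dist x₃ x₂ = G.dist x₂ x₃ from SimpleGraph.dist_comm, d23] at tri2
  -- pin down the distances
  have hdc : Γ.dist (Sum.inl x₃) (Sum.inl y) ≤ 2 * d := hdist_le _ _
  rw [hde] at hdc
  have hc3 : G.dist x₃ y = d := by omega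
  have ha' : G.dist x₁ y = d - 1 := by omega
  have hb' : G.dist x₂ y = d - 1 := by omega
  have D1 : Γ.dist (Sum.inl y) (Sum.inl x₁) = 2 * (d - 1) := by
    rw [SimpleGraph.dist_comm, hde, ha']
  have D2 : Γ.dist (Sum.inl y) (Sum.inl x₂) = 2 * (d - 1) := by
    rw [SimpleGraph.dist_comm, hde, hb']
  have D3 : Γ.dist (Sum.inl y) (Sum.inl x₃) = 2 * d := by
    rw [SimpleGraph.dist_comm, hde, hc3]
  -- distance from y to the line L
  obtain ⟨Q1, hQ1⟩ := (hreach (Sum.inl y) (Sum.inl x₁)).exists_walk_length_eq_dist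
  obtain ⟨Q2, hQ2⟩ := (hreach (Sum.inl y) (Sum.inl x₂)).exists_walk_length_eq_dist
  rw [D1] at hQ1
  rw [D2] at hQ2
  set W1 : Γ.Walk (Sum.inl y) (Sum.inr L) := Q1.concat (adj_pl h1) with hW1
  set W2 : Γ.Walk (Sum.inl y) (Sum.inr L) := Q2.concat (adj_pl h2) with hW2
  have hW1len : W1.length = 2 * d - 1 := by
    rw [hW1, Walk.length_concat, hQ1]; omega
  have hW2len : W2.length = 2 * d - 1 := by
    rw [hW2, Walk.length_concat, hQ2]; omega
  have hmub : Γ.dist (Sum.inl y) (Sum.inr L) ≤ 2 * d - 1 := by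
    have := SimpleGraph.dist_le W1
    omega
  have hmlb : 2 * d - 1 ≤ Γ.dist (Sum.inl y) (Sum.inr L) := by
    obtain ⟨w, hw⟩ := (hreach (Sum.inl y) (Sum.inr L)).exists_walk_length_eq_dist
    have h3' := SimpleGraph.dist_le (w.concat (adj_lp h3))
    rw [Walk.length_concat, hw, D3] at h3'
    omega
  have hmL : Γ.dist (Sum.inl y) (Sum.inr L) = 2 * d - 1 := le_antisymm hmub hmlb
  have hW1path : W1.IsPath :=
    W1.isPath_of_length_eq_dist (by rw [hW1len, hmL])
  have hW2path : W2.IsPath :=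
    W2.isPath_of_length_eq_dist (by rw [hW2len, hmL])
  -- W1 ≠ W2
  have hx1Q2 : (Sum.inl x₁ : G.P ⊕ G.L) ∉ Q2.support := by
    intro hmem
    have htk : Γ.dist (Sum.inl y) (Sum.inl x₁) ≤ (Q2.takeUntil _ hmem).length :=
      SimpleGraph.dist_le _
    have hdp : Γ.dist (Sum.inl x₁) (Sum.inl x₂) ≤ (Q2.dropUntil _ hmem).length :=
      SimpleGraph.dist_le _
    have hsplit := congrArg Walk.length (Q2.take_spec hmem)
    rw [Walk.length_append] at hsplit
    have adj12 : G.pointGraph.Adj x₁ x₂ := ⟨h12, L, h1, h2⟩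
    have d12 : G.dist x₁ x₂ = 1 := dist_eq_one_iff_adj.mpr adj12
    rw [hde, d12] at hdp
    rw [hQ2] at hsplit
    rw [D1] at htk
    omega
  have hW1W2 : W1 ≠ W2 := by
    intro heq
    have hx1W1 : (Sum.inl x₁ : G.P ⊕ G.L) ∈ W1.support := by
      rw [hW1, Walk.support_concat]
      exact List.mem_append.mpr (Or.inl Q1.end_mem_support)
    rw [heq, hW2, Walk.support_concat] at hx1W1
    rcases List.mem_append.mp hx1W1 with hmem | habs
    · exact hx1Q2 hmem
    · simp at habs
  obtain ⟨w0, c0, hc0, hlc0⟩ :=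
    cycle_of_two_paths (W1.length + W2.length) W1 W2 hW1path hW2path hW1W2 le_rfl
  -- girth contradiction
  have hgirth : Γ.girth = 4 * d := hG.2
  have hegle : Γ.egirth ≤ (c0.length : ℕ∞) := by
    calc Γ.egirth ≤ ⨅ w : Γ.Walk w0 w0, ⨅ _ : w.IsCycle, (w.length : ℕ∞) :=
          iInf_le _ w0
    _ ≤ ⨅ _ : c0.IsCycle, (c0.length : ℕ∞) := iInf_le _ c0
    _ ≤ (c0.length : ℕ∞) := iInf_le _ hc0
  have : Γ.girth ≤ c0.length := by
    rw [show Γ.girth = Γ.egirth.toNat from rfl]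
    have := ENat.toNat_le_toNat hegle (ENat.coe_ne_top _)
    simpa using this
  omega

end Key

/-- If a generalized 2d-gon S is a full subgeometry of a generalized 2d-gon S' and
x₁, x₂, x₃ are three distinct points on a common line of S', then
H_{x₁} ∩ H_{x₂} = H_{x₁} ∩ H_{x₃}, where H_x is the set of points of S at distance
at most d − 1 from x. -/
theorem hyperplane_intersections_eq (G : Geometry) (d : ℕ) (hd : 2 ≤ d)
    (hG : G.IsGenPolygon d) (PS : Set G.P) (LS : Set G.L)
    (hfull : G.IsFullSub PS LS) (hS : (G.sub PS LS).IsGenPolygon d)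
    (L : G.L) (x₁ x₂ x₃ : G.P) (h1 : G.I x₁ L) (h2 : G.I x₂ L) (h3 : G.I x₃ L)
    (h12 : x₁ ≠ x₂) (h13 : x₁ ≠ x₃) (h23 : x₂ ≠ x₃) :
    {y ∈ PS | G.dist x₁ y ≤ d - 1 ∧ G.dist x₂ y ≤ d - 1} =
    {y ∈ PS | G.dist x₁ y ≤ d - 1 ∧ G.dist x₃ y ≤ d - 1} := by
  ext y
  simp only [Set.mem_setOf_eq]
  constructor
  · rintro ⟨hy, hA, hB⟩
    exact ⟨hy, hA, key_lemma G d hd hG L x₁ x₂ x₃ h1 h2 h3 h12 h13 h23 y hA hB⟩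
  · rintro ⟨hy, hA, hB⟩
    exact ⟨hy, hA, key_lemma G d hd hG L x₁ x₃ x₂ h1 h3 h2 h13 h12 h23.symm y hA hB⟩
end
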